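/- Let K be a field with a nonarchimedean multiplicative norm ‖·‖ : K → ℝ≥0 whose value group is all of ℝ_{>0} (for every real r > 0 there exists x ∈ K with ‖x‖ = r). Let K° = {x ∈ K : ‖x‖ ≤ 1} and 𝔪 = {x ∈ K : ‖x‖ < 1}. Let M ⊆ K be a nonzero K°-submodule of K that is bounded (there is C > 0 with ‖m‖ ≤ C for all m ∈ M) and satisfies 𝔪·M = M. Then there exists r > 0 such that M = {x ∈ K : ‖x‖ < r}; equivalently, there exists a nonzero k₀ ∈ K with M = k₀·𝔪, so M is isomorphic to 𝔪 as a K°-module. -/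

import Mathlib

/-!
Take `r = sup {v m : m ∈ M}`, which exists because `M` is bounded and is positive because
`M ≠ 0`. Every element of `𝔪 • M` is a sum of products `a • m` with `v a < 1`, so it has
valuation `< r`; hence `M = 𝔪 • M` lies in the open ball of radius `r`. Conversely, if
`v x < r` then `v x ≤ v m` for some `m ∈ M`, and `x = (x / m) • m` with `x / m ∈ K°`.
-/

/-- The maximal ideal `𝔪 = {x : ‖x‖ < 1}` of the valuation ring `K° = {x : ‖x‖ ≤ 1}`. -/
def maxIdeal {K : Type*} [Field K] (v : Valuation K NNReal) : Ideal v.integer where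
  carrier := {x : v.integer | v (x : K) < 1}
  add_mem' := fun {a b} ha hb => lt_of_le_of_lt (v.map_add _ _) (max_lt ha hb)
  zero_mem' := by simp
  smul_mem' := fun c x hx => by
    have hc : v (c : K) ≤ 1 := c.2
    show v ((c * x : v.integer) : K) < 1
    calc v ((c * x : v.integer) : K) = v (c : K) * v (x : K) := by
          push_cast; exact v.map_mul _ _
      _ ≤ 1 * v (x : K) := mul_le_mul_of_nonneg_right hc zero_le
      _ = v (x : K) := one_mul _
      _ < 1 := hx

theorem Valuation.mem_submodule_of_le {K Γ₀ : Type*} [Field K]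
    [LinearOrderedCommGroupWithZero Γ₀] {v : Valuation K Γ₀} {M : Submodule v.integer K}
    {x m : K} (hm : m ∈ M) (hxm : v x ≤ v m) : x ∈ M := by
  rcases eq_or_ne m 0 with rfl | hm0
  · rw [map_zero, le_zero_iff, map_eq_zero] at hxm
    exact hxm ▸ M.zero_mem
  · have hc : v (x * m⁻¹) ≤ 1 := by
      rw [map_mul, map_inv₀, mul_inv_le_iff₀ (v.pos_iff.2 hm0), one_mul]
      exact hxm
    have hsmul : (⟨x * m⁻¹, hc⟩ : v.integer) • m = x := inv_mul_cancel_right₀ hm0 x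
    exact hsmul ▸ M.smul_mem _ hm

theorem valuation_lt_of_mem_maxIdeal_smul {K : Type*} [Field K] {v : Valuation K NNReal}
    {M : Submodule v.integer K} {r : NNReal} (hr : 0 < r) (hM : ∀ m ∈ M, v m ≤ r) {x : K}
    (hx : x ∈ maxIdeal v • M) : v x < r := by
  refine Submodule.smul_induction_on hx (fun a ha m hm => ?_) fun x y hx hy => ?_
  · change v ((a : K) * m) < r
    rw [map_mul]
    rcases eq_zero_or_pos (v m) with hm0 | hm0
    · rwa [hm0, mul_zero]
    · calc v a * v m < 1 * v m := mul_lt_mul_of_pos_right ha hm0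
        _ = v m := one_mul _
        _ ≤ r := hM m hm
  · exact (v.map_add x y).trans_lt (max_lt hx hy)

theorem bounded_almost_free_submodule_eq_ball_general (K : Type*) [Field K]
    (v : Valuation K NNReal)
    (M : Submodule v.integer K) (hM : M ≠ ⊥)
    (hbdd : ∃ C : NNReal, 0 < C ∧ ∀ m ∈ M, v m ≤ C)
    (hsmul : maxIdeal v • M = M) :
    ∃ r : NNReal, 0 < r ∧ (M : Set K) = {x : K | v x < r} := by
  obtain ⟨C, -, hC⟩ := hbdd
  have hbddAbove : BddAbove (v '' M) := ⟨C, Set.forall_mem_image.2 hC⟩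
  set r := sSup (v '' M)
  have hle : ∀ m ∈ M, v m ≤ r := fun m hm => le_csSup hbddAbove (Set.mem_image_of_mem v hm)
  obtain ⟨m₀, hm₀, hm₀ne⟩ := Submodule.exists_mem_ne_zero_of_ne_bot hM
  have hr : 0 < r := (v.pos_iff.2 hm₀ne).trans_le (hle m₀ hm₀)
  refine ⟨r, hr, Set.Subset.antisymm (fun x hx => ?_) (fun x hx => ?_)⟩
  · exact valuation_lt_of_mem_maxIdeal_smul hr hle (hsmul.symm ▸ hx)
  · obtain ⟨_, ⟨m, hm, rfl⟩, hxm⟩ :=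
      exists_lt_of_lt_csSup (Set.image_nonempty.2 ⟨0, M.zero_mem⟩) (show v x < r from hx)
    exact v.mem_submodule_of_le hm hxm.le

/-- Let `K` be a field with a nonarchimedean multiplicative norm whose value group is all
of `ℝ_{>0}`.  Let `M ⊆ K` be a nonzero bounded `K°`-submodule of `K` with `𝔪 • M = M`.
Then `M = {x : K | v x < r}` for some `r > 0`. -/
theorem bounded_almost_free_submodule_eq_ball (K : Type*) [Field K]
    (v : Valuation K NNReal)
    (hsurj : ∀ r : NNReal, 0 < r → ∃ x : K, v x = r)
    (M : Submodule v.integer K) (hM : M ≠ ⊥)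
    (hbdd : ∃ C : NNReal, 0 < C ∧ ∀ m ∈ M, v m ≤ C)
    (hsmul : maxIdeal v • M = M) :
    ∃ r : NNReal, 0 < r ∧ (M : Set K) = {x : K | v x < r} :=
  bounded_almost_free_submodule_eq_ball_general K v M hM hbdd hsmul
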